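/- arXiv:2206.12461 — 10 statements merged into one kernel-verified Lean document; each statement's English description precedes it below -/
import Mathlib

section
/- In any square-increasing involutive commutative residuated lattice, f³ = f², where f = ¬e. -/
/-- An involutive commutative residuated lattice: a commutative monoid with a
lattice order and an involution `neg` satisfying `¬¬x = x` and
`x * y ≤ z ↔ neg z * y ≤ neg x`. The identity `1` is the neutral element `e`. -/
class IRL (α : Type*) extends Lattice α, CommMonoid α where
  neg : α → α
  neg_neg : ∀ x : α, neg (neg x) = x
  law : ∀ x y z : α, x * y ≤ z ↔ neg z * y ≤ neg x

open IRL

lemma IRL.neg_antitone {α : Type*} [IRL α] {x y : α} (h : x ≤ y) : neg y ≤ neg x := by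
  have := (law x 1 y).mp (by simpa using h)
  simpa using this

lemma IRL.mul_le_mul_r {α : Type*} [IRL α] {x y : α} (z : α) (h : x ≤ y) :
    x * z ≤ y * z := by
  have h1 : neg (y * z) * z ≤ neg y := (law y z (y * z)).mp le_rfl
  have h2 : neg (y * z) * z ≤ neg x := h1.trans (IRL.neg_antitone h)
  have h3 : x * z ≤ neg (neg (y * z)) := by
    refine (law x z (neg (neg (y * z)))).mpr ?_
    rwa [IRL.neg_neg]
  rwa [IRL.neg_neg] at h3

theorem stmt4 {α : Type*} [IRL α] (hsq : ∀ x : α, x ≤ x * x) :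
    neg (1 : α) * neg 1 * neg 1 = neg 1 * neg 1 := by
  have f_def : True := trivial
  let f : α := neg 1
  let t : α := f * f
  let a : α := neg t
  show f * f * f = f * f
  -- t * a ≤ f
  have h4 : t * a ≤ f := by
    refine (law t a f).mpr ?_
    show neg (neg 1) * a ≤ neg t
    rw [IRL.neg_neg, one_mul]
  -- a * t ≤ a * f
  have h7 : a * t ≤ a * f := by
    have h1 : a * t ≤ (a * a) * t := IRL.mul_le_mul_r t (hsq a)
    have h2 : (a * a) * t = (t * a) * a := by
      rw [mul_comm (t*a) a, mul_assoc, mul_comm t a, ← mul_assoc]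
    have h3 : (t * a) * a ≤ f * a := IRL.mul_le_mul_r a h4
    rw [mul_comm f a] at h3
    exact (h1.trans_eq h2).trans h3
  -- a * (f*f*f) ≤ f
  have h8 : a * (f * f * f) ≤ f := by
    have h1 : a * (f * f * f) = (a * t) * f := by
      show a * (f * f * f) = (a * (f * f)) * f
      simp only [mul_comm, mul_assoc, mul_left_comm]
    have h2 : (a * t) * f ≤ (a * f) * f := IRL.mul_le_mul_r f h7
    have h3 : (a * f) * f = t * a := by
      show (a * f) * f = (f * f) * a
      simp only [mul_comm, mul_assoc, mul_left_comm]
    calc a * (f * f * f) = (a * t) * f := h1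
      _ ≤ (a * f) * f := h2
      _ = t * a := h3
      _ ≤ f := h4
  -- hence f*f*f ≤ t
  have h9 : f * f * f ≤ t := by
    have h2 := (law a (f * f * f) f).mp h8
    have h3 : neg f = (1 : α) := IRL.neg_neg 1
    rw [h3, one_mul] at h2
    have h5 : neg a = t := IRL.neg_neg t
    rwa [h5] at h2
  -- and t ≤ f*f*f
  have h10 : t ≤ f * f * f := IRL.mul_le_mul_r f (hsq f)
  exact le_antisymm h9 h10
end

section
/- For a square-increasing involutive commutative residuated lattice A with f = ¬e, the following are equivalent: (1) f·f = f; (2) f ≤ e; (3) A is idempotent, i.e., x·x = x for all x in A. -/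
open IRL

section Aux

variable {α : Type*} [IRL α]

lemma IRL.le_iff_neg (x y : α) : x ≤ y ↔ neg y ≤ neg x := by
  have h := law x 1 y
  simpa using h

lemma IRL.le_iff_mul_neg (x y : α) : x ≤ y ↔ x * neg y ≤ neg 1 := by
  rw [law x (neg y) (neg 1), neg_neg, one_mul, ← le_iff_neg]

lemma IRL.mul_mono_right {x y : α} (z : α) (h : x ≤ y) : x * z ≤ y * z := by
  rw [law x z (y * z)]
  exact le_trans ((law y z (y * z)).mp le_rfl) ((le_iff_neg x y).mp h)

lemma IRL.mul_mono {a b c d : α} (h1 : a ≤ b) (h2 : c ≤ d) : a * c ≤ b * d := by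
  calc a * c ≤ b * c := mul_mono_right c h1
    _ = c * b := mul_comm _ _
    _ ≤ d * b := mul_mono_right b h2
    _ = b * d := mul_comm _ _

end Aux

theorem stmt5 {α : Type*} [IRL α] (hsq : ∀ x : α, x ≤ x * x) :
    (neg (1 : α) * neg 1 = neg 1 ↔ neg (1 : α) ≤ 1) ∧
    (neg (1 : α) ≤ 1 ↔ ∀ x : α, x * x = x) := by
  have key : ∀ x : α, neg (1 : α) ≤ 1 → x * x ≤ x := by
    intro x h
    rw [IRL.le_iff_mul_neg]
    have hx : x * neg x ≤ neg 1 := (IRL.le_iff_mul_neg x x).mp le_rfl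
    calc x * x * neg x ≤ x * x * (neg x * neg x) :=
          IRL.mul_mono le_rfl (hsq (neg x))
      _ = (x * neg x) * (x * neg x) := mul_mul_mul_comm x x (neg x) (neg x)
      _ ≤ neg 1 * neg 1 := IRL.mul_mono hx hx
      _ ≤ neg 1 * 1 := IRL.mul_mono le_rfl h
      _ = neg 1 := mul_one _
  have iff1 : neg (1 : α) * neg 1 = neg 1 ↔ neg (1 : α) ≤ 1 := by
    constructor
    · intro h
      exact (IRL.le_iff_mul_neg (neg 1) 1).mpr (le_of_eq h)
    · intro h
      exact le_antisymm (le_trans (key (neg 1) h) le_rfl) (hsq (neg 1))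
  refine ⟨iff1, ?_, fun h => iff1.mp (h (neg 1))⟩
  intro h x
  exact le_antisymm (key x h) (hsq x)
end

section
/- Let A be a totally ordered idempotent commutative residuated lattice. Then for all x, y: x·y = x if |y| < |x|; x·y = y if |x| < |y|; x·y = x ∧ y if |x| = |y|. Moreover x → y = x* ∨ y if x ≤ y, and x → y = x* ∧ y if x > y. -/
/-- A commutative residuated lattice: a commutative monoid with a lattice order
and a residual operation `rdiv` satisfying `x * y ≤ z ↔ y ≤ rdiv x z`.
The monoid identity `1` plays the role of the neutral element `e`. -/
class CRL (α : Type*) extends Lattice α, CommMonoid α where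
  rdiv : α → α → α
  resid : ∀ x y z : α, x * y ≤ z ↔ y ≤ rdiv x z

open CRL

section Aux
variable {α : Type*} [CRL α]

lemma crl_mul_rdiv_le (x z : α) : x * rdiv x z ≤ z := (resid x _ z).mpr le_rfl

lemma crl_mono_r {x y y' : α} (h : y ≤ y') : x * y ≤ x * y' :=
  (resid x y _).mpr (h.trans ((resid x y' _).mp le_rfl))

lemma crl_mono_l {x x' : α} (y : α) (h : x ≤ x') : x * y ≤ x' * y := by
  rw [mul_comm x y, mul_comm x' y]; exact crl_mono_r h

lemma crl_self_le_abs (hid : ∀ x : α, x * x = x) (x : α) : x ≤ rdiv x x :=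
  (resid x x x).mp (le_of_eq (hid x))

lemma crl_one_le_abs (x : α) : (1:α) ≤ rdiv x x := (resid x 1 x).mp (le_of_eq (mul_one x))

lemma crl_mul_abs (x : α) : x * rdiv x x = x := by
  refine le_antisymm (crl_mul_rdiv_le x x) ?_
  calc x = x * 1 := (mul_one x).symm
    _ ≤ x * rdiv x x := crl_mono_r (crl_one_le_abs x)

lemma crl_mul_star_le_self (hid : ∀ x : α, x * x = x) (x : α) : x * rdiv x 1 ≤ x := by
  have h : x * (x * rdiv x 1) ≤ x * 1 := crl_mono_r (crl_mul_rdiv_le x 1)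
  rwa [← mul_assoc, hid, mul_one] at h

lemma crl_mul_star_le_star (hid : ∀ x : α, x * x = x) (x : α) :
    x * rdiv x 1 ≤ rdiv x 1 := by
  refine (resid x _ 1).mp ?_
  have h : x * (x * rdiv x 1) = x * rdiv x 1 := by rw [← mul_assoc, hid]
  exact h.le.trans (crl_mul_rdiv_le x 1)

lemma crl_star_le_abs (hid : ∀ x : α, x * x = x) (x : α) : rdiv x 1 ≤ rdiv x x :=
  (resid _ _ _).mp (crl_mul_star_le_self hid x)

/-- if x*y ≤ 1 then x*y ≤ y -/
lemma crl_mul_le_of_le_one (hid : ∀ x : α, x * x = x) {x y : α} (h : x * y ≤ 1) :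
    x * y ≤ y := by
  have h2 : x * (y * y) ≤ 1 * y := by
    rw [← mul_assoc]; exact crl_mono_l y h
  rwa [hid, one_mul] at h2

/-- Part 1: |y| < |x| → x*y = x -/
lemma crl_p1 (htot : ∀ a b : α, a ≤ b ∨ b ≤ a) (hid : ∀ x : α, x * x = x)
    (x y : α) (h : rdiv y y < rdiv x x) : x * y = x := by
  refine le_antisymm ((resid x y x).mpr ((crl_self_le_abs hid y).trans h.le)) ?_
  rcases htot 1 (rdiv x x * y) with h1 | h1
  · calc x = x * 1 := (mul_one x).symm
      _ ≤ x * (rdiv x x * y) := crl_mono_r h1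
      _ = (x * rdiv x x) * y := (mul_assoc _ _ _).symm
      _ = x * y := by rw [crl_mul_abs]
  · exfalso
    have h2 : y * rdiv x x ≤ 1 := by rwa [mul_comm]
    have h3 : rdiv x x ≤ rdiv y 1 := (resid y _ 1).mp h2
    exact absurd (h3.trans (crl_star_le_abs hid y)) (not_le_of_gt h)

/-- x ≤ y and y ≤ |x| implies x*y = x -/
lemma crl_p3' (hid : ∀ x : α, x * x = x) (x y : α) (hxy : x ≤ y)
    (h : y ≤ rdiv x x) : x * y = x := by
  refine le_antisymm ((resid x y x).mpr h) ?_
  calc x = x * x := (hid x).symm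
    _ ≤ x * y := crl_mono_r hxy

/-- Part 4: x ≤ y → x→y = x* ⊔ y -/
lemma crl_p4 (htot : ∀ a b : α, a ≤ b ∨ b ≤ a) (hid : ∀ x : α, x * x = x)
    (x y : α) (hxy : x ≤ y) : rdiv x y = rdiv x 1 ⊔ y := by
  refine le_antisymm ?_ (sup_le ?_ ?_)
  · rcases htot (x * rdiv x y) 1 with h1 | h1
    · exact le_sup_of_le_left ((resid x _ 1).mp h1)
    · refine le_sup_of_le_right ?_
      calc rdiv x y = rdiv x y * 1 := (mul_one _).symm
        _ ≤ rdiv x y * (x * rdiv x y) := crl_mono_r h1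
        _ = x * (rdiv x y * rdiv x y) := by rw [mul_left_comm]
        _ = x * rdiv x y := by rw [hid]
        _ ≤ y := crl_mul_rdiv_le x y
  · exact (resid x _ y).mp ((crl_mul_star_le_self hid x).trans hxy)
  · refine (resid x y y).mp ?_
    have h : y * x ≤ y := (resid y x y).mpr (hxy.trans (crl_self_le_abs hid y))
    rwa [mul_comm] at h

/-- Part 5: y < x → x→y = x* ⊓ y -/
lemma crl_p5 (htot : ∀ a b : α, a ≤ b ∨ b ≤ a) (hid : ∀ x : α, x * x = x)
    (x y : α) (hxy : y < x) : rdiv x y = rdiv x 1 ⊓ y := by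
  refine le_antisymm (le_inf ?_ ?_) ?_
  · rcases htot (x * rdiv x y) 1 with h1 | h1
    · exact (resid x _ 1).mp h1
    · exfalso
      refine absurd ?_ (not_le_of_gt hxy)
      calc x = x * 1 := (mul_one x).symm
        _ ≤ x * (x * rdiv x y) := crl_mono_r h1
        _ = (x * x) * rdiv x y := (mul_assoc _ _ _).symm
        _ = x * rdiv x y := by rw [hid]
        _ ≤ y := crl_mul_rdiv_le x y
  · rcases htot (rdiv x y) x with h1 | h1
    · calc rdiv x y = rdiv x y * rdiv x y := (hid _).symm
        _ ≤ x * rdiv x y := crl_mono_l _ h1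
        _ ≤ y := crl_mul_rdiv_le x y
    · exfalso
      refine absurd ?_ (not_le_of_gt hxy)
      calc x = x * x := (hid x).symm
        _ ≤ x * rdiv x y := crl_mono_r h1
        _ ≤ y := crl_mul_rdiv_le x y
  · rcases htot (rdiv x 1) y with h1 | h1
    · exact inf_le_of_left_le ((resid x _ y).mp ((crl_mul_star_le_star hid x).trans h1))
    · exact inf_le_of_right_le
        ((resid x y y).mp (crl_mul_le_of_le_one hid ((resid x y 1).mpr h1)))

end Aux

theorem stmt10 {α : Type*} [CRL α]
    (htot : ∀ a b : α, a ≤ b ∨ b ≤ a)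
    (hid : ∀ x : α, x * x = x) (x y : α) :
    (rdiv y y < rdiv x x → x * y = x) ∧
    (rdiv x x < rdiv y y → x * y = y) ∧
    (rdiv x x = rdiv y y → x * y = x ⊓ y) ∧
    (x ≤ y → rdiv x y = rdiv x 1 ⊔ y) ∧
    (y < x → rdiv x y = rdiv x 1 ⊓ y) := by
  refine ⟨crl_p1 htot hid x y, ?_, ?_, crl_p4 htot hid x y, crl_p5 htot hid x y⟩
  · intro h
    rw [mul_comm]; exact crl_p1 htot hid y x h
  · intro h
    rcases htot x y with hxy | hxy
    · rw [crl_p3' hid x y hxy (h ▸ crl_self_le_abs hid y), inf_eq_left.mpr hxy]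
    · rw [mul_comm, crl_p3' hid y x hxy (h ▸ crl_self_le_abs hid x), inf_eq_right.mpr hxy]
end

section
/- Let A be a totally ordered idempotent commutative residuated lattice, F a deductive filter of A (a lattice filter containing e that is closed under fusion), and a, b distinct elements of A with a → b ∈ F and b → a ∈ F. Then b → e ∈ F and b ∈ F (i.e., b is congruent to e modulo F). -/
open CRL

theorem stmt11 {α : Type*} [CRL α]
    (htot : ∀ a b : α, a ≤ b ∨ b ≤ a)
    (hid : ∀ x : α, x * x = x)
    (F : Set α)
    (hone : (1 : α) ∈ F)
    (hup : ∀ a b : α, a ∈ F → a ≤ b → b ∈ F)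
    (hinf : ∀ a b : α, a ∈ F → b ∈ F → a ⊓ b ∈ F)
    (hmul : ∀ a b : α, a ∈ F → b ∈ F → a * b ∈ F)
    (a b : α) (hne : a ≠ b)
    (hab : rdiv a b ∈ F) (hba : rdiv b a ∈ F) :
    rdiv b 1 ∈ F ∧ b ∈ F := by
  have mono : ∀ x z w : α, z ≤ w → x * z ≤ x * w := by
    intro x z w h
    exact (resid x z (x * w)).mpr (le_trans h ((resid x w (x * w)).mp le_rfl))
  have mono' : ∀ x y z : α, x ≤ y → x * z ≤ y * z := by
    intro x y z h
    calc x * z = z * x := mul_comm _ _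
      _ ≤ z * y := mono z x y h
      _ = y * z := mul_comm _ _
  have hres : ∀ x y : α, x * rdiv x y ≤ y := fun x y => (resid x _ y).mpr le_rfl
  rcases htot a b with h | h
  · -- case a ≤ b (and a ≠ b)
    set t := rdiv b a with ht
    have hbt : b * t ≤ a := hres b a
    have htb : t ≤ b := by
      rcases htot b t with h' | h'
      · exfalso
        apply hne
        refine le_antisymm h ?_
        calc b = b * b := (hid b).symm
          _ ≤ b * t := mono b b t h'
          _ ≤ a := hbt
      · exact h'
    have hta : t ≤ a := by
      calc t = t * t := (hid t).symm
        _ ≤ t * b := mono t t b htb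
        _ = b * t := mul_comm _ _
        _ ≤ a := hbt
    have hbF : b ∈ F := hup a b (hup t a hba hta) h
    have hbe : b * t ≤ 1 := by
      rcases htot 1 (b * t) with h' | h'
      · exfalso
        apply hne
        refine le_antisymm h ?_
        calc b = b * 1 := (mul_one b).symm
          _ ≤ b * (b * t) := mono b 1 (b * t) h'
          _ = (b * b) * t := (mul_assoc b b t).symm
          _ = b * t := by rw [hid b]
          _ ≤ a := hbt
      · exact h'
    exact ⟨hup t _ hba ((resid b t 1).mp hbe), hbF⟩
  · -- case b ≤ a (and a ≠ b)
    set s := rdiv a b with hs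
    have has : a * s ≤ b := hres a b
    have hsa : s ≤ a := by
      rcases htot a s with h' | h'
      · exfalso
        apply hne
        refine le_antisymm ?_ h
        calc a = a * a := (hid a).symm
          _ ≤ a * s := mono a a s h'
          _ ≤ b := has
      · exact h'
    have hsb : s ≤ b := by
      calc s = s * s := (hid s).symm
        _ ≤ s * a := mono s s a hsa
        _ = a * s := mul_comm _ _
        _ ≤ b := has
    have hbF : b ∈ F := hup s b hab hsb
    have hbe : b * s ≤ 1 := by
      rcases htot 1 (b * s) with h' | h'
      · exfalso
        apply hne
        refine le_antisymm ?_ h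
        calc a = a * 1 := (mul_one a).symm
          _ ≤ a * (b * s) := mono a 1 (b * s) h'
          _ = (a * s) * b := by rw [mul_comm b s, ← mul_assoc]
          _ ≤ b * b := mono' (a * s) b b has
          _ = b := hid b
      · exact h'
    exact ⟨hup s _ hab ((resid b s 1).mp hbe), hbF⟩
end

section
/- Let A be a totally ordered idempotent commutative residuated lattice and I an interval of A containing e that is closed under the operation x* := x → e. Then I is closed under all the operations ·, →, ∧, ∨ of A (i.e., I is a subuniverse). -/
open CRL

theorem stmt12 {α : Type*} [CRL α]
    (htot : ∀ a b : α, a ≤ b ∨ b ≤ a)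
    (hid : ∀ x : α, x * x = x)
    (I : Set α)
    (hconv : ∀ x y z : α, x ∈ I → y ∈ I → x ≤ z → z ≤ y → z ∈ I)
    (hone : (1 : α) ∈ I)
    (hstar : ∀ x : α, x ∈ I → rdiv x 1 ∈ I) :
    ∀ x y : α, x ∈ I → y ∈ I →
      x * y ∈ I ∧ rdiv x y ∈ I ∧ x ⊓ y ∈ I ∧ x ⊔ y ∈ I := by
  -- monotonicity of multiplication
  have mono : ∀ x a b : α, a ≤ b → x * a ≤ x * b := by
    intro x a b h
    exact (resid x a (x * b)).mpr (h.trans ((resid x b (x * b)).mp le_rfl))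
  have mono' : ∀ a b x : α, a ≤ b → a * x ≤ b * x := by
    intro a b x h
    rw [mul_comm a x, mul_comm b x]; exact mono x a b h
  have hdiv : ∀ x y : α, x * rdiv x y ≤ y := fun x y => (resid x (rdiv x y) y).mpr le_rfl
  -- product closure
  have hprod : ∀ x y : α, x ∈ I → y ∈ I → x * y ∈ I := by
    intro x y hx hy
    rcases htot x y with h | h
    · refine hconv x y (x * y) hx hy ?_ ?_
      · calc x = x * x := (hid x).symm
          _ ≤ x * y := mono x x y h
      · calc x * y ≤ y * y := mono' x y y h
          _ = y := hid y
    · refine hconv y x (x * y) hy hx ?_ ?_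
      · calc y = y * y := (hid y).symm
          _ ≤ x * y := mono' y x y h
      · calc x * y ≤ x * x := mono x y x h
          _ = x := hid x
  intro x y hx hy
  refine ⟨hprod x y hx hy, ?_, ?_, ?_⟩
  · -- rdiv closure
    set t := rdiv x y with ht
    have hlmem : rdiv x 1 * y ∈ I := hprod _ _ (hstar x hx) hy
    have hl : rdiv x 1 * y ≤ t := by
      rw [ht]
      refine (resid x (rdiv x 1 * y) y).mp ?_
      calc x * (rdiv x 1 * y) = (x * rdiv x 1) * y := (mul_assoc _ _ _).symm
        _ ≤ 1 * y := mono' _ 1 y (hdiv x 1)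
        _ = y := one_mul y
    have humem : rdiv x 1 ⊔ y ∈ I := by
      rcases htot (rdiv x 1) y with h | h
      · rw [sup_eq_right.mpr h]; exact hy
      · rw [sup_eq_left.mpr h]; exact hstar x hx
    have hu : t ≤ rdiv x 1 ⊔ y := by
      rcases htot (t * x) 1 with h | h
      · refine le_sup_of_le_left ?_
        exact (resid x t 1).mp (by rw [mul_comm x t]; exact h)
      · refine le_sup_of_le_right ?_
        calc t = t * 1 := (mul_one t).symm
          _ ≤ t * (t * x) := mono t 1 (t * x) h
          _ = (t * t) * x := (mul_assoc _ _ _).symm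
          _ = t * x := by rw [hid t]
          _ = x * t := mul_comm t x
          _ ≤ y := hdiv x y
    exact hconv _ _ t hlmem humem hl hu
  · rcases htot x y with h | h
    · rw [inf_eq_left.mpr h]; exact hx
    · rw [inf_eq_right.mpr h]; exact hy
  · rcases htot x y with h | h
    · rw [sup_eq_right.mpr h]; exact hy
    · rw [sup_eq_left.mpr h]; exact hx
end

section
/- Let A be a totally ordered idempotent commutative residuated lattice, I an interval of A containing e that is closed under x* := x → e, and define I∗ := {a ∈ A : a ∉ I and a* ∈ I}. Then: every element of I∗ is strictly below every element of I; and if b ∈ I∗ then b* is the greatest element of I. -/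
open CRL

theorem stmt13 {α : Type*} [CRL α]
    (htot : ∀ a b : α, a ≤ b ∨ b ≤ a)
    (hid : ∀ x : α, x * x = x)
    (I : Set α)
    (hconv : ∀ x y z : α, x ∈ I → y ∈ I → x ≤ z → z ≤ y → z ∈ I)
    (hone : (1 : α) ∈ I)
    (hstar : ∀ x : α, x ∈ I → rdiv x 1 ∈ I) :
    (∀ a : α, a ∈ {a : α | a ∉ I ∧ rdiv a 1 ∈ I} → ∀ x : α, x ∈ I → a < x) ∧
    (∀ b : α, b ∈ {a : α | a ∉ I ∧ rdiv a 1 ∈ I} →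
      rdiv b 1 ∈ I ∧ ∀ x : α, x ∈ I → x ≤ rdiv b 1) := by
  -- multiplication is monotone in the right argument
  have mono : ∀ z x y : α, x ≤ y → z * x ≤ z * y := by
    intro z x y hxy
    have h : y ≤ rdiv z (z * y) := (resid z y (z * y)).mp le_rfl
    exact (resid z x (z * y)).mpr (le_trans hxy h)
  -- x * (x → 1) ≤ 1
  have hxx : ∀ x : α, x * rdiv x 1 ≤ 1 := fun x =>
    (resid x (rdiv x 1) 1).mpr le_rfl
  -- a ≤ a**
  have ledd : ∀ a : α, a ≤ rdiv (rdiv a 1) 1 := by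
    intro a
    apply (resid (rdiv a 1) a 1).mp
    calc rdiv a 1 * a = a * rdiv a 1 := mul_comm _ _
      _ ≤ 1 := hxx a
  have part1 : ∀ a : α, a ∈ {a : α | a ∉ I ∧ rdiv a 1 ∈ I} →
      ∀ x : α, x ∈ I → a < x := by
    intro a ha x hx
    obtain ⟨hanI, hasI⟩ := ha
    have hdd : rdiv (rdiv a 1) 1 ∈ I := hstar _ hasI
    have hax : a ≤ x := by
      rcases htot a x with h | h
      · exact h
      · exact absurd (hconv x (rdiv (rdiv a 1) 1) a hx hdd h (ledd a)) hanI
    exact lt_of_le_of_ne hax (by rintro rfl; exact hanI hx)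
  refine ⟨part1, ?_⟩
  intro b hb
  refine ⟨hb.2, ?_⟩
  intro x hx
  have hxsI : rdiv x 1 ∈ I := hstar x hx
  have hblt : b < rdiv x 1 := part1 b hb _ hxsI
  -- b * x ≤ (x→1) * x = x * (x→1) ≤ 1
  have hbx : b * x ≤ 1 := by
    calc b * x = x * b := mul_comm _ _
      _ ≤ x * rdiv x 1 := mono x b (rdiv x 1) hblt.le
      _ ≤ 1 := hxx x
  exact (resid b x 1).mp hbx
end

section
/- Let A be a totally ordered square-increasing distributive commutative residuated lattice (a totally ordered Dunn monoid) that is generated as an algebra by a set X of idempotent elements (a·a = a for each a ∈ X). Then every element of A is idempotent. -/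
open CRL

lemma crl_mul_le_mul_left {α : Type*} [CRL α] {x y : α} (z : α) (h : x ≤ y) :
    z * x ≤ z * y := by
  have : y ≤ rdiv z (z * y) := (resid z y (z * y)).mp le_rfl
  exact (resid z x (z * y)).mpr (h.trans this)

theorem stmt14 {α : Type*} [CRL α]
    (htot : ∀ a b : α, a ≤ b ∨ b ≤ a)
    (hsq : ∀ x : α, x ≤ x * x)
    (X : Set α)
    (hX : ∀ a ∈ X, a * a = a)
    (hgen : ∀ S : Set α, (1 : α) ∈ S → X ⊆ S →
      (∀ x y : α, x ∈ S → y ∈ S → x * y ∈ S ∧ rdiv x y ∈ S ∧ x ⊓ y ∈ S ∧ x ⊔ y ∈ S) →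
      ∀ a : α, a ∈ S) :
    ∀ a : α, a * a = a := by
  refine hgen {a | a * a = a} (by simp) hX ?_
  intro x y hx hy
  simp only [Set.mem_setOf_eq] at hx hy ⊢
  refine ⟨?_, ?_, ?_, ?_⟩
  · calc (x * y) * (x * y) = (x * x) * (y * y) := mul_mul_mul_comm x y x y
      _ = x * y := by rw [hx, hy]
  · set c := rdiv x y with hc
    refine le_antisymm ?_ (hsq c)
    refine (resid x (c * c) y).mp ?_
    have hxc : x * c ≤ y := (resid x c y).mpr le_rfl
    calc x * (c * c) = (x * x) * (c * c) := by rw [hx]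
      _ = (x * c) * (x * c) := mul_mul_mul_comm x x c c
      _ ≤ (x * c) * y := crl_mul_le_mul_left _ hxc
      _ = y * (x * c) := mul_comm _ _
      _ ≤ y * y := crl_mul_le_mul_left _ hxc
      _ = y := hy
  · rcases htot x y with h | h
    · rw [inf_eq_left.mpr h, hx]
    · rw [inf_eq_right.mpr h, hy]
  · rcases htot x y with h | h
    · rw [sup_eq_right.mpr h, hy]
    · rw [sup_eq_left.mpr h, hx]
end

section
/- In the Sugihara monoid Z* on the nonzero integers (lattice order the usual order, involution negation, fusion a·b being the element with greater absolute value, or a ∧ b if |a| = |b|), the equation x = (x ∧ e) · ¬(¬x ∧ f) holds, where e = 1 and f = −1. -/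
/-- Fusion of the Sugihara monoid Z* (and Z): the argument of greater absolute
value, or the minimum when absolute values agree. -/
def zfus (a b : ℤ) : ℤ := if |a| < |b| then b else if |b| < |a| then a else min a b

/-- In Z*, x = (x ∧ e) · ¬(¬x ∧ f), where e = 1, f = -1 and ¬ is negation. -/
theorem stmt15 : ∀ a : ℤ, a ≠ 0 → zfus (min a 1) (-(min (-a) (-1))) = a := by
  intro a ha
  unfold zfus
  rcases lt_or_gt_of_ne ha with h | h
  · have h1 : min a 1 = a := min_eq_left (by omega)
    have h2 : min (-a) (-1) = -1 := min_eq_right (by omega)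
    rw [h1, h2]
    simp only [neg_neg]
    rcases eq_or_lt_of_le (show a ≤ -1 by omega) with he | hl
    · subst he; norm_num
    · rw [if_neg, if_pos] <;> rw [abs_of_pos one_pos, abs_of_neg h] <;> omega
  · have h1 : min a 1 = 1 := min_eq_right (by omega)
    have h2 : min (-a) (-1) = -a := min_eq_left (by omega)
    rw [h1, h2]
    simp only [neg_neg]
    rcases eq_or_lt_of_le (show 1 ≤ a by omega) with he | hl
    · simp [← he]
    · rw [if_pos] ; rw [abs_of_pos one_pos, abs_of_pos h]; omega
end

section
/- In a nontrivial non-idempotent FSI De Morgan monoid A (with e join-irreducible), if f² ≤ a then ¬a < a and the interval [¬a, a] is closed under ·, ∧, ∨, ¬ and contains e (i.e., it is a subuniverse of A), where f = ¬e. -/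
/-- A De Morgan monoid: a distributive square-increasing involutive
commutative residuated lattice. `1` is the neutral element `e`. -/
class DMM (α : Type*) extends DistribLattice α, CommMonoid α where
  neg : α → α
  neg_neg : ∀ x : α, neg (neg x) = x
  law : ∀ x y z : α, x * y ≤ z ↔ neg z * y ≤ neg x
  sq : ∀ x : α, x ≤ x * x

open DMM

section DMMLemmas

variable {α : Type*} [DMM α]

private lemma dmm_neg_le_neg {x y : α} (h : x ≤ y) : neg y ≤ neg x := by
  have hl := DMM.law x 1 y
  rw [mul_one, mul_one] at hl
  exact hl.1 h

private lemma dmm_mul_le_r {x y : α} (h : x ≤ y) (c : α) : x * c ≤ y * c := by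
  have h1 : neg (y * c) * c ≤ neg y := (DMM.law y c (y * c)).1 le_rfl
  exact (DMM.law x c (y * c)).2 (h1.trans (dmm_neg_le_neg h))

private lemma dmm_mul_le_mul {x y z w : α} (h1 : x ≤ y) (h2 : z ≤ w) :
    x * z ≤ y * w := by
  calc x * z ≤ y * z := dmm_mul_le_r h1 z
  _ = z * y := mul_comm _ _
  _ ≤ w * y := dmm_mul_le_r h2 y
  _ = y * w := mul_comm _ _

private lemma dmm_neg_sup (x y : α) : neg (x ⊔ y) = neg x ⊓ neg y := by
  apply le_antisymm
  · exact le_inf (dmm_neg_le_neg le_sup_left) (dmm_neg_le_neg le_sup_right)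
  · have hx : x ≤ neg (neg x ⊓ neg y) := by
      have := dmm_neg_le_neg (inf_le_left (a := neg x) (b := neg y))
      rwa [DMM.neg_neg] at this
    have hy : y ≤ neg (neg x ⊓ neg y) := by
      have := dmm_neg_le_neg (inf_le_right (a := neg x) (b := neg y))
      rwa [DMM.neg_neg] at this
    have h := dmm_neg_le_neg (sup_le hx hy)
    rwa [DMM.neg_neg] at h

private lemma dmm_neg_inf (x y : α) : neg (x ⊓ y) = neg x ⊔ neg y := by
  have h := dmm_neg_sup (neg x) (neg y)
  rw [DMM.neg_neg, DMM.neg_neg] at h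
  rw [← h, DMM.neg_neg]

private lemma dmm_mul_neg_self (x : α) : x * neg x ≤ neg 1 := by
  refine (DMM.law x (neg x) (neg 1)).2 ?_
  rw [DMM.neg_neg, one_mul]

private lemma dmm_neg_mul_self (x : α) : neg x * x ≤ neg 1 := by
  have := dmm_mul_neg_self (neg x)
  rwa [DMM.neg_neg] at this

private lemma dmm_inf_neg_le (x : α) : x ⊓ neg x ≤ neg 1 :=
  le_trans (le_trans (DMM.sq _) (dmm_mul_le_mul inf_le_left inf_le_right))
    (dmm_mul_neg_self x)

private lemma dmm_one_le_sup_neg (x : α) : (1 : α) ≤ x ⊔ neg x := by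
  have h := dmm_neg_le_neg (dmm_inf_neg_le x)
  rw [DMM.neg_neg, dmm_neg_inf, DMM.neg_neg] at h
  exact le_trans h (le_of_eq (sup_comm _ _))

private lemma dmm_sup_mul_le {x y z w : α} (hx : x * z ≤ w) (hy : y * z ≤ w) :
    (x ⊔ y) * z ≤ w := by
  have hx' := (DMM.law x z w).1 hx
  have hy' := (DMM.law y z w).1 hy
  refine (DMM.law (x ⊔ y) z w).2 ?_
  rw [dmm_neg_sup]
  exact le_inf hx' hy'

private lemma dmm_idem_of_le_one {u : α} (h : u ≤ 1) : u * u = u := by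
  refine le_antisymm ?_ (DMM.sq u)
  calc u * u ≤ u * 1 := dmm_mul_le_mul le_rfl h
  _ = u := mul_one u

private lemma dmm_trick {u x : α} (h1 : u ≤ 1) (h2 : u * x ≤ 1) : u * x ≤ u := by
  calc u * x = (u * u) * x := by rw [dmm_idem_of_le_one h1]
  _ = u * (u * x) := mul_assoc _ _ _
  _ ≤ u * 1 := dmm_mul_le_mul le_rfl h2
  _ = u := mul_one u

/-- The key identity valid in every De Morgan monoid: `x² ≤ x ⊔ f²`. -/
private lemma dmm_sq_le_sup_ff (x : α) : x * x ≤ x ⊔ neg 1 * neg 1 := by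
  have hf2 : (neg 1 : α) ≤ neg 1 * neg 1 := DMM.sq _
  have hnegf2 : neg (neg 1 * neg 1 : α) ≤ 1 := by
    have := dmm_neg_le_neg hf2
    rwa [DMM.neg_neg] at this
  have hu1 : (neg x ⊓ neg (neg 1 * neg 1) : α) ≤ 1 := le_trans inf_le_right hnegf2
  have step1 : (neg (neg 1 * neg 1) : α) * neg 1 ≤ 1 := by
    refine (DMM.law _ _ _).2 ?_
    rw [DMM.neg_neg]
  have hux1 : (neg x ⊓ neg (neg 1 * neg 1)) * x ≤ 1 := by
    calc (neg x ⊓ neg (neg 1 * neg 1)) * x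
        = ((neg x ⊓ neg (neg 1 * neg 1)) * (neg x ⊓ neg (neg 1 * neg 1))) * x := by
          rw [dmm_idem_of_le_one hu1]
    _ ≤ (neg (neg 1 * neg 1) * neg x) * x :=
          dmm_mul_le_r (dmm_mul_le_mul inf_le_right inf_le_left) x
    _ = neg (neg 1 * neg 1) * (neg x * x) := mul_assoc _ _ _
    _ ≤ neg (neg 1 * neg 1) * neg 1 := dmm_mul_le_mul le_rfl (dmm_neg_mul_self x)
    _ ≤ 1 := step1
  have hfinal : (neg x ⊓ neg (neg 1 * neg 1)) * x ≤ neg x :=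
    le_trans (dmm_trick hu1 hux1) inf_le_left
  refine (DMM.law x x _).2 ?_
  rw [dmm_neg_sup]
  exact hfinal

/-- If `f² ≤ f` then the De Morgan monoid is idempotent. -/
private lemma dmm_idem_of_ff_le (h : (neg 1 : α) * neg 1 ≤ neg 1) :
    ∀ x : α, x * x ≤ x := by
  -- first: f ≤ 1
  have hs : ((neg 1 : α) ⊔ 1) * neg 1 ≤ neg 1 :=
    dmm_sup_mul_le h (one_mul (neg (1 : α))).le
  have hfs : (neg 1 : α) * (neg 1 ⊔ 1) ≤ neg 1 := by rwa [mul_comm]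
  have hs1 : ((neg 1 : α) ⊔ 1) ≤ 1 := by
    have h2 := (DMM.law (neg 1) (neg 1 ⊔ 1) (neg 1)).1 hfs
    rwa [DMM.neg_neg, one_mul] at h2
  have hf1 : (neg 1 : α) ≤ 1 := le_trans le_sup_left hs1
  intro x
  -- x * x ≤ x ⊔ f
  have hu1 : (neg x ⊓ 1 : α) ≤ 1 := inf_le_right
  have hux1 : (neg x ⊓ 1) * x ≤ 1 :=
    le_trans (dmm_mul_le_r inf_le_left x) (le_trans (dmm_neg_mul_self x) hf1)
  have hux : (neg x ⊓ 1) * x ≤ neg x := le_trans (dmm_trick hu1 hux1) inf_le_left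
  have hB : x * x ≤ x ⊔ neg 1 := by
    refine (DMM.law x x _).2 ?_
    rw [dmm_neg_sup, DMM.neg_neg]
    exact hux
  have ht1 : (x * x ⊓ neg 1 : α) ≤ 1 := le_trans inf_le_right hf1
  have htx : (x * x ⊓ neg 1) * x ≤ x := by
    calc (x * x ⊓ neg 1) * x ≤ 1 * x := dmm_mul_le_r ht1 x
    _ = x := one_mul x
  have htnx : (x * x ⊓ neg 1) * neg x ≤ x := by
    calc (x * x ⊓ neg 1) * neg x ≤ (x * x) * neg x := dmm_mul_le_r inf_le_left _
    _ = x * (x * neg x) := mul_assoc _ _ _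
    _ ≤ x * 1 := dmm_mul_le_mul le_rfl (le_trans (dmm_mul_neg_self x) hf1)
    _ = x := mul_one x
  have htsum : (x * x ⊓ neg 1 : α) ≤ x := by
    calc (x * x ⊓ neg 1 : α) = (x * x ⊓ neg 1) * 1 := (mul_one _).symm
    _ ≤ (x * x ⊓ neg 1) * (x ⊔ neg x) := dmm_mul_le_mul le_rfl (dmm_one_le_sup_neg x)
    _ = (x ⊔ neg x) * (x * x ⊓ neg 1) := mul_comm _ _
    _ ≤ x := dmm_sup_mul_le (by rw [mul_comm]; exact htx) (by rw [mul_comm]; exact htnx)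
  calc x * x = (x * x) ⊓ (x ⊔ neg 1) := (inf_eq_left.mpr hB).symm
  _ = ((x * x) ⊓ x) ⊔ ((x * x) ⊓ neg 1) := inf_sup_left _ _ _
  _ ≤ x := sup_le inf_le_right htsum

end DMMLemmas

theorem stmt16 {α : Type*} [DMM α] [Nontrivial α]
    (hFSI : ∀ x y : α, x ⊔ y = 1 → x = 1 ∨ y = 1)
    (hNI : ∃ x : α, x * x ≠ x)
    (a : α) (ha : neg (1 : α) * neg 1 ≤ a) :
    neg a < a ∧
    (neg a ≤ 1 ∧ (1 : α) ≤ a) ∧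
    (∀ x y : α, neg a ≤ x → x ≤ a → neg a ≤ y → y ≤ a →
      (neg a ≤ x * y ∧ x * y ≤ a) ∧
      (neg a ≤ x ⊓ y ∧ x ⊓ y ≤ a) ∧
      (neg a ≤ x ⊔ y ∧ x ⊔ y ≤ a)) ∧
    (∀ x : α, neg a ≤ x → x ≤ a → neg a ≤ neg x ∧ neg x ≤ a) := by
  obtain ⟨w, hw⟩ := hNI
  have hNI' : ¬ ((neg 1 : α) * neg 1 ≤ neg 1) := fun h =>
    hw (le_antisymm (dmm_idem_of_ff_le h w) (DMM.sq w))
  -- FSI dichotomy applied to f² : since f² ≤ f is impossible, 1 ≤ f²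
  have hdec : ((1 : α) ⊓ (neg 1 * neg 1)) ⊔ ((1 : α) ⊓ neg (neg 1 * neg 1)) = 1 := by
    rw [← inf_sup_left]
    exact inf_eq_left.mpr (dmm_one_le_sup_neg _)
  have h1f2 : (1 : α) ≤ neg 1 * neg 1 := by
    rcases hFSI _ _ hdec with h | h
    · exact inf_eq_left.mp h
    · exfalso
      have h2 : (1 : α) ≤ neg (neg 1 * neg 1) := inf_eq_left.mp h
      have h3 : (neg 1 * neg 1 : α) ≤ neg 1 := by
        have := dmm_neg_le_neg h2
        rwa [DMM.neg_neg] at this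
      exact hNI' h3
  have hnegf2 : neg ((neg 1 : α) * neg 1) ≤ 1 := by
    have := dmm_neg_le_neg (DMM.sq (neg (1 : α)))
    rwa [DMM.neg_neg] at this
  have hna_le : neg a ≤ 1 := le_trans (dmm_neg_le_neg ha) hnegf2
  have h1a : (1 : α) ≤ a := le_trans h1f2 ha
  have hna_a : neg a ≤ a := le_trans hna_le h1a
  have haa : a * a ≤ a := by
    have h := dmm_sq_le_sup_ff a
    rwa [sup_eq_left.mpr ha] at h
  have hne : neg a ≠ a := by
    intro h
    have ha1 : a = 1 := le_antisymm (h ▸ hna_le) h1a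
    have hf21 : (neg 1 * neg 1 : α) ≤ 1 := ha1 ▸ ha
    have hfle1 : (neg 1 : α) ≤ 1 := le_trans (DMM.sq (neg (1 : α))) hf21
    have : (neg 1 : α) * neg 1 ≤ neg 1 := by
      calc (neg 1 : α) * neg 1 ≤ 1 * neg 1 := dmm_mul_le_r hfle1 _
      _ = neg 1 := one_mul _
    exact hNI' this
  refine ⟨lt_of_le_of_ne hna_a hne, ⟨hna_le, h1a⟩, ?_, ?_⟩
  · intro x y hnx hxa hny hya
    refine ⟨⟨?_, ?_⟩, ⟨?_, ?_⟩, ⟨?_, ?_⟩⟩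
    · exact le_trans (DMM.sq (neg a)) (dmm_mul_le_mul hnx hny)
    · exact le_trans (dmm_mul_le_mul hxa hya) haa
    · exact le_inf hnx hny
    · exact le_trans inf_le_left hxa
    · exact le_trans hnx le_sup_left
    · exact sup_le hxa hya
  · intro x hnx hxa
    refine ⟨dmm_neg_le_neg hxa, ?_⟩
    have := dmm_neg_le_neg hnx
    rwa [DMM.neg_neg] at this
end

section
/- Let A be a non-idempotent FSI De Morgan monoid. Then the upward-closed set G := [¬(f²)) = {x : ¬(f·f) ≤ x} is a deductive filter of A, the quotient A/G is a totally ordered odd Sugihara monoid, the congruence class of e is exactly the interval [¬(f²), f²], and every element outside this interval is alone in its congruence class. -/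
open DMM

/-- The residual of a De Morgan monoid: x → y := ¬(x · ¬y). -/
def DMM.arr {α : Type*} [DMM α] (x y : α) : α := neg (x * neg y)

namespace DMMProof

variable {α : Type*} [DMM α]

lemma nle {x z : α} : x ≤ z ↔ neg z ≤ neg x := by
  have h := DMM.law x 1 z
  simpa using h

lemma le_neg_iff {x z : α} : x ≤ neg z ↔ z ≤ neg x := by
  rw [nle, DMM.neg_neg]

lemma neg_le_iff {x z : α} : neg x ≤ z ↔ neg z ≤ x := by
  rw [nle, DMM.neg_neg]

lemma mono_r {a b : α} (c : α) (h : a ≤ b) : a * c ≤ b * c := by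
  have h1 : neg (b * c) * c ≤ neg b := (DMM.law b c (b * c)).mp le_rfl
  exact (DMM.law a c (b * c)).mpr (h1.trans (nle.mp h))

lemma mono {a b c d : α} (h1 : a ≤ b) (h2 : c ≤ d) : a * c ≤ b * d := by
  refine (mono_r c h1).trans ?_
  rw [mul_comm b c, mul_comm b d]
  exact mono_r b h2

lemma resid {a c d : α} : a * c ≤ d ↔ c ≤ DMM.arr a d := by
  have h1 : a * c ≤ d ↔ c * neg d ≤ neg a := by
    rw [DMM.law a c d, mul_comm (neg d) c]
  have h2 : c * neg d ≤ neg a ↔ a * neg d ≤ neg c := by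
    have h := DMM.law c (neg d) (neg a)
    rwa [DMM.neg_neg] at h
  have h3 : a * neg d ≤ neg c ↔ c ≤ neg (a * neg d) := le_neg_iff.symm
  exact (h1.trans h2).trans h3

lemma mp_arr (a d : α) : a * DMM.arr a d ≤ d := resid.mpr le_rfl

lemma one_le_arr {a b : α} : 1 ≤ DMM.arr a b ↔ a ≤ b := by
  rw [← resid, mul_one]

lemma xnegx (x : α) : x * neg x ≤ neg 1 := by
  have h : DMM.arr x (neg 1) = neg x := by
    simp [DMM.arr, DMM.neg_neg]
  exact resid.mpr (le_of_eq h.symm)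

lemma f_le_k : neg (1 : α) ≤ neg 1 * neg 1 := DMM.sq _

lemma nk_le_one : neg (neg (1 : α) * neg 1) ≤ 1 := by
  have h := nle.mp (f_le_k (α := α))
  rwa [DMM.neg_neg] at h

lemma negmeet (x y : α) : neg (x ⊓ y) = neg x ⊔ neg y := by
  apply le_antisymm
  · rw [neg_le_iff]
    exact le_inf (neg_le_iff.mpr le_sup_left) (neg_le_iff.mpr le_sup_right)
  · exact sup_le (nle.mp inf_le_left) (nle.mp inf_le_right)

lemma dich (hFSI : ∀ x y : α, x ⊔ y = 1 → x = 1 ∨ y = 1) (x : α) :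
    1 ≤ x ∨ x ≤ neg 1 := by
  have h1 : x ⊓ neg x ≤ neg 1 :=
    (DMM.sq _).trans ((mono inf_le_left inf_le_right).trans (xnegx x))
  have h2 : (1 : α) ≤ x ⊔ neg x := by
    have h := le_neg_iff.mpr h1
    rw [negmeet, DMM.neg_neg] at h
    exact h.trans (sup_comm (neg x) x).le
  have h3 : (x ⊓ 1) ⊔ (neg x ⊓ 1) = 1 := by
    rw [← inf_sup_right]
    exact inf_eq_right.mpr h2
  rcases hFSI _ _ h3 with h | h
  · exact Or.inl (inf_eq_right.mp h)
  · exact Or.inr (le_neg_iff.mp (inf_eq_right.mp h))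

lemma O : neg (neg (1 : α) * neg 1) * neg (neg 1 * neg 1) = neg (neg 1 * neg 1) := by
  apply le_antisymm
  · refine resid.mpr ?_
    have e1 : DMM.arr (neg (neg (1 : α) * neg 1)) (neg (neg 1 * neg 1)) =
        neg (neg (neg 1 * neg 1) * (neg 1 * neg 1)) := by
      simp only [DMM.arr, DMM.neg_neg]
    rw [e1, le_neg_iff, DMM.neg_neg, mul_comm]
    exact (xnegx _).trans f_le_k
  · exact DMM.sq _

lemma fnk1 : neg (1 : α) * neg (neg 1 * neg 1) ≤ 1 := by
  have h : DMM.arr (neg (1 : α)) 1 = neg (neg 1 * neg 1) := by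
    simp [DMM.arr]
  have := mp_arr (neg (1 : α)) 1
  rwa [h] at this

lemma fnk : neg (1 : α) * neg (neg 1 * neg 1) ≤ neg (neg 1 * neg 1) := by
  calc neg (1 : α) * neg (neg 1 * neg 1)
      = neg (1 : α) * (neg (neg 1 * neg 1) * neg (neg 1 * neg 1)) := by rw [O]
    _ = (neg (1 : α) * neg (neg 1 * neg 1)) * neg (neg 1 * neg 1) := (mul_assoc _ _ _).symm
    _ ≤ 1 * neg (neg 1 * neg 1) := mono_r _ fnk1
    _ = neg (neg 1 * neg 1) := one_mul _

lemma Cf : (neg (1 : α) * neg 1) * neg 1 ≤ neg 1 * neg 1 := by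
  refine (DMM.law _ _ _).mpr ?_
  rw [mul_comm]
  exact fnk

lemma Ck : (neg (1 : α) * neg 1) * (neg 1 * neg 1) ≤ neg 1 * neg 1 := by
  calc (neg (1 : α) * neg 1) * (neg 1 * neg 1)
      = ((neg (1 : α) * neg 1) * neg 1) * neg 1 := (mul_assoc _ _ _).symm
    _ ≤ (neg (1 : α) * neg 1) * neg 1 := mono_r _ Cf
    _ ≤ neg 1 * neg 1 := Cf

lemma D (a : α) : a * a * neg a ≤ neg 1 * neg 1 := by
  calc a * a * neg a ≤ a * a * (neg a * neg a) := mono le_rfl (DMM.sq _)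
    _ = (a * neg a) * (a * neg a) := mul_mul_mul_comm a a (neg a) (neg a)
    _ ≤ neg 1 * neg 1 := mono (xnegx a) (xnegx a)

lemma Dk (a : α) : a * a * neg (neg 1 * neg 1) ≤ a := by
  refine (DMM.law (a * a) (neg (neg 1 * neg 1)) a).mpr ?_
  have h := (DMM.law (a * a) (neg a) (neg 1 * neg 1)).mp (D a)
  rwa [mul_comm (neg (neg 1 * neg 1)) (neg a)] at h

lemma B (hFSI : ∀ x y : α, x ⊔ y = 1 → x = 1 ∨ y = 1)
    (hNI : ∃ x : α, x * x ≠ x) : (1 : α) ≤ neg 1 * neg 1 := by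
  rcases dich hFSI (neg (1 : α) * neg 1) with h | h
  · exact h
  · exfalso
    obtain ⟨c, hc⟩ := hNI
    apply hc
    have hD : c * c * neg c ≤ neg 1 := (D c).trans h
    have h2 := (DMM.law (c * c) (neg c) (neg 1)).mp hD
    rw [DMM.neg_neg, one_mul] at h2
    exact le_antisymm (nle.mpr h2) (DMM.sq c)

lemma E (hFSI : ∀ x y : α, x ⊔ y = 1 → x = 1 ∨ y = 1) (a b : α) :
    a * neg b ≤ neg 1 * neg 1 ∨ b * neg a ≤ neg 1 * neg 1 := by
  rcases dich hFSI (a * neg b) with h | h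
  · rcases dich hFSI (b * neg a) with h' | h'
    · left
      calc a * neg b = (a * neg b) * 1 := (mul_one _).symm
        _ ≤ (a * neg b) * (b * neg a) := mono le_rfl h'
        _ = (a * neg a) * (b * neg b) := by
            rw [mul_mul_mul_comm a (neg b) b (neg a), mul_comm (neg b) (neg a),
              ← mul_mul_mul_comm a b (neg a) (neg b)]
        _ ≤ neg 1 * neg 1 := mono (xnegx a) (xnegx b)
    · exact Or.inr (h'.trans f_le_k)
  · exact Or.inl (h.trans f_le_k)

lemma N (hFSI : ∀ x y : α, x ⊔ y = 1 → x = 1 ∨ y = 1) {a : α}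
    (h : ¬ a ≤ neg 1 * neg 1) : a ≤ a * neg (neg 1 * neg 1) := by
  -- b := a * ¬k is idempotent-decreasing: a * b ≤ b
  have hab : a * (a * neg (neg 1 * neg 1)) ≤ a * neg (neg 1 * neg 1) := by
    calc a * (a * neg (neg 1 * neg 1))
        = (a * a) * neg (neg 1 * neg 1) := (mul_assoc _ _ _).symm
      _ = (a * a) * (neg (neg 1 * neg 1) * neg (neg 1 * neg 1)) := by rw [O]
      _ = ((a * a) * neg (neg 1 * neg 1)) * neg (neg 1 * neg 1) := (mul_assoc _ _ _).symm
      _ ≤ a * neg (neg 1 * neg 1) := mono_r _ (Dk a)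
  -- r := arr a k ≤ f
  have hr : DMM.arr a (neg 1 * neg 1) ≤ neg 1 := by
    rcases dich hFSI (DMM.arr a (neg 1 * neg 1)) with h1 | h1
    · exact absurd (one_le_arr.mp h1) h
    · exact h1
  -- a * r ≤ r
  have har : a * DMM.arr a (neg 1 * neg 1) ≤ DMM.arr a (neg 1 * neg 1) := by
    refine resid.mpr ?_
    have e1 : DMM.arr a (DMM.arr a (neg 1 * neg 1)) = neg (a * (a * neg (neg 1 * neg 1))) := by
      simp only [DMM.arr, DMM.neg_neg]
    rw [e1]
    have e2 : DMM.arr a (neg 1 * neg 1) = neg (a * neg (neg 1 * neg 1)) := rfl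
    rw [e2, le_neg_iff, DMM.neg_neg]
    exact hab
  have harf : a * DMM.arr a (neg 1 * neg 1) ≤ neg 1 := har.trans hr
  have h2 := (DMM.law a (DMM.arr a (neg 1 * neg 1)) (neg 1)).mp harf
  rw [DMM.neg_neg, one_mul] at h2
  have h3 := le_neg_iff.mp h2
  simp only [DMM.arr, DMM.neg_neg] at h3
  exact h3

end DMMProof

open DMMProof in
/-- For a non-idempotent FSI De Morgan monoid `A`, with `f := ¬e`,
`G := [¬(f²))` is a deductive filter, the quotient `A/G` is a totally ordered
odd Sugihara monoid, the class of `e` is the interval `[¬(f²), f²]`, and all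
other congruence classes are singletons. -/
theorem stmt19 {α : Type*} [DMM α]
    (hFSI : ∀ x y : α, x ⊔ y = 1 → x = 1 ∨ y = 1)
    (hNI : ∃ x : α, x * x ≠ x) :
    -- G := {x : ¬(f²) ≤ x} is a deductive filter:
    (neg (neg (1 : α) * neg 1) ≤ 1) ∧
    (∀ a b : α, neg (neg (1 : α) * neg 1) ≤ a → a ≤ b → neg (neg (1 : α) * neg 1) ≤ b) ∧
    (∀ a b : α, neg (neg (1 : α) * neg 1) ≤ a → neg (neg (1 : α) * neg 1) ≤ b →
      neg (neg (1 : α) * neg 1) ≤ a ⊓ b) ∧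
    (∀ a b : α, neg (neg (1 : α) * neg 1) ≤ a → neg (neg (1 : α) * neg 1) ≤ b →
      neg (neg (1 : α) * neg 1) ≤ a * b) ∧
    -- the quotient A/G is totally ordered:
    (∀ a b : α, neg (neg (1 : α) * neg 1) ≤ DMM.arr a b ∨
      neg (neg (1 : α) * neg 1) ≤ DMM.arr b a) ∧
    -- the quotient is odd: f/G = e/G
    (neg (neg (1 : α) * neg 1) ≤ DMM.arr (neg 1) 1 ∧
     neg (neg (1 : α) * neg 1) ≤ DMM.arr 1 (neg 1)) ∧
    -- the quotient is idempotent (hence an odd Sugihara monoid):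
    (∀ a : α, neg (neg (1 : α) * neg 1) ≤ DMM.arr (a * a) a ∧
      neg (neg (1 : α) * neg 1) ≤ DMM.arr a (a * a)) ∧
    -- the class of e is exactly the interval [¬(f²), f²]:
    (∀ a : α,
      (neg (neg (1 : α) * neg 1) ≤ DMM.arr a 1 ∧ neg (neg (1 : α) * neg 1) ≤ DMM.arr 1 a)
        ↔ (neg (neg (1 : α) * neg 1) ≤ a ∧ a ≤ neg 1 * neg 1)) ∧
    -- every element outside this interval is alone in its class:
    (∀ a b : α, ¬(neg (neg (1 : α) * neg 1) ≤ a ∧ a ≤ neg 1 * neg 1) →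
      neg (neg (1 : α) * neg 1) ≤ DMM.arr a b →
      neg (neg (1 : α) * neg 1) ≤ DMM.arr b a → a = b) := by
  refine ⟨nk_le_one, ?_, ?_, ?_, ?_, ⟨?_, ?_⟩, ?_, ?_, ?_⟩
  · exact fun a b h hab => h.trans hab
  · exact fun a b ha hb => le_inf ha hb
  · intro a b ha hb
    calc neg (neg (1 : α) * neg 1)
        = neg (neg (1 : α) * neg 1) * neg (neg 1 * neg 1) := O.symm
      _ ≤ a * b := mono ha hb
  · -- totality
    intro a b
    rcases E hFSI a b with h | h
    · left
      rw [show DMM.arr a b = neg (a * neg b) from rfl, le_neg_iff, DMM.neg_neg]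
      exact h
    · right
      rw [show DMM.arr b a = neg (b * neg a) from rfl, le_neg_iff, DMM.neg_neg]
      exact h
  · -- odd 1
    rw [show DMM.arr (neg (1 : α)) 1 = neg (neg 1 * neg 1) by simp [DMM.arr]]
  · -- odd 2
    rw [show DMM.arr (1 : α) (neg 1) = neg 1 by simp [DMM.arr, DMM.neg_neg]]
    have h := nle.mp (B hFSI hNI)
    exact h
  · -- idempotency of quotient
    intro a
    constructor
    · rw [show DMM.arr (a * a) a = neg (a * a * neg a) from rfl, le_neg_iff, DMM.neg_neg]
      exact D a
    · exact nk_le_one.trans (one_le_arr.mpr (DMM.sq a))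
  · -- class of e
    intro a
    have harr1 : DMM.arr (1 : α) a = a := by simp [DMM.arr, DMM.neg_neg]
    constructor
    · rintro ⟨h1, h2⟩
      rw [harr1] at h2
      refine ⟨h2, ?_⟩
      have hf : a * neg 1 ≤ neg 1 * neg 1 := by
        rw [show DMM.arr a (1 : α) = neg (a * neg 1) by simp [DMM.arr], le_neg_iff,
          DMM.neg_neg] at h1
        exact h1
      by_contra hak
      have hN := N hFSI hak
      have hnk : neg (neg (1 : α) * neg 1) ≤ neg 1 := nle.mp (B hFSI hNI)
      have : a ≤ neg 1 * neg 1 :=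
        hN.trans ((mono (le_refl a) hnk).trans hf)
      exact hak this
    · rintro ⟨h1, h2⟩
      constructor
      · rw [show DMM.arr a (1 : α) = neg (a * neg 1) by simp [DMM.arr], le_neg_iff,
          DMM.neg_neg]
        exact (mono_r (neg 1) h2).trans Cf
      · rw [harr1]
        exact h1
  · -- singletons
    intro a b hout h1 h2
    have hab : a * neg (neg 1 * neg 1) ≤ b := resid.mpr h1
    have hba : b * neg (neg 1 * neg 1) ≤ a := resid.mpr h2
    by_cases hak : a ≤ neg 1 * neg 1
    · -- then ¬(¬k ≤ a), so ¬a is outside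
      have hnka : ¬ neg (neg (1 : α) * neg 1) ≤ a := fun hh => hout ⟨hh, hak⟩
      have hna : ¬ neg a ≤ neg 1 * neg 1 := by
        intro hh
        apply hnka
        have := nle.mp hh
        rwa [DMM.neg_neg] at this
      have h3 : neg a ≤ neg a * neg (neg 1 * neg 1) := N hFSI hna
      have h4 : neg a * neg (neg 1 * neg 1) ≤ neg b :=
        (DMM.law b (neg (neg 1 * neg 1)) a).mp hba
      have h5 : b ≤ a := nle.mpr (h3.trans h4)
      have hnb : ¬ neg b ≤ neg 1 * neg 1 := fun hh => hna ((h3.trans h4).trans hh)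
      have h6 : neg b ≤ neg b * neg (neg 1 * neg 1) := N hFSI hnb
      have h7 : neg b * neg (neg 1 * neg 1) ≤ neg a :=
        (DMM.law a (neg (neg 1 * neg 1)) b).mp hab
      exact le_antisymm (nle.mpr (h6.trans h7)) h5
    · have h3 : a ≤ b := (N hFSI hak).trans hab
      have hbk : ¬ b ≤ neg 1 * neg 1 := fun hh => hak (h3.trans hh)
      exact le_antisymm h3 ((N hFSI hbk).trans hba)
end
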